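/- For every ℓ ≥ 1, the number of 321-avoiding alternating (up-down) permutations of length 2ℓ+1 that begin with their smallest entry is the Catalan number C_ℓ. -/

import Mathlib

/-- `w` is an alternating (up-down) permutation: `w 0 < w 1 > w 2 < ⋯`. -/
def UpDown {n : ℕ} (w : Equiv.Perm (Fin n)) : Prop :=
  ∀ i : ℕ, ∀ h : i + 1 < n,
    if i % 2 = 0 then w ⟨i, Nat.lt_of_succ_lt h⟩ < w ⟨i + 1, h⟩
    else w ⟨i + 1, h⟩ < w ⟨i, Nat.lt_of_succ_lt h⟩

/-- `w` is a reverse-alternating (down-up) permutation: `w 0 > w 1 < w 2 > ⋯`. -/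
def DownUp {n : ℕ} (w : Equiv.Perm (Fin n)) : Prop :=
  ∀ i : ℕ, ∀ h : i + 1 < n,
    if i % 2 = 0 then w ⟨i + 1, h⟩ < w ⟨i, Nat.lt_of_succ_lt h⟩
    else w ⟨i, Nat.lt_of_succ_lt h⟩ < w ⟨i + 1, h⟩

/-- The set of occurrences of the pattern 321 in `w`. -/
def occ321 {n : ℕ} (w : Equiv.Perm (Fin n)) : Set (Fin n × Fin n × Fin n) :=
  {t | t.1 < t.2.1 ∧ t.2.1 < t.2.2 ∧ w t.2.2 < w t.2.1 ∧ w t.2.1 < w t.1}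

/-- The set of occurrences of the pattern 123 in `w`. -/
def occ123 {n : ℕ} (w : Equiv.Perm (Fin n)) : Set (Fin n × Fin n × Fin n) :=
  {t | t.1 < t.2.1 ∧ t.2.1 < t.2.2 ∧ w t.1 < w t.2.1 ∧ w t.2.1 < w t.2.2}

/-!
Let `w` be a 321-avoiding alternating permutation of `{0, …, 2l}` with `w 0 = 0`. Its valleys
(values at even positions) increase: a valley below an earlier valley `w (2i)`, `i > 0`, would
complete a 321 pattern with the peak `w (2i - 1)`, and `w 0 = 0` is the least value. Its peaks
(values at odd positions) increase as well, since a drop from a peak to a later peak continues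
with a drop to the next valley. So `w` is the alternating merge of the increasing enumerations of
`Pᶜ` and `P`, where `P` is its set of peak values, and the alternation condition says exactly that
the `(m+1)`-st valley value lies below the `m`-th peak value, i.e. that every initial segment
`{0, …, k}` holds fewer peak than valley values. Conversely, the merge of any such ballot set and
its complement avoids 321, since among three positions two have the same parity. Reading the
values `1, …, 2l` as up-steps (valleys) and down-steps (peaks) turns ballot sets into Dyck words
of semilength `l`, of which there are `C_l`.
-/

open Finset DyckStep

lemma List.count_take_ofFn {α : Type*} [DecidableEq α] {n : ℕ} (f : Fin n → α) (a : α)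
    (m : ℕ) :
    ((List.ofFn f).take m).count a = #{i : Fin n | (i : ℕ) < m ∧ f i = a} := by
  induction n generalizing m with
  | zero => simp
  | succ n ih =>
    cases m with
    | zero => simp
    | succ m =>
      rw [List.ofFn_succ, List.take_succ_cons, List.count_cons, ih, Fin.card_filter_univ_succ]
      by_cases h : f 0 = a <;> simp [h]

lemma Antitone.orderEmbOfFin_iff_lt_card_filter {α : Type*} [LinearOrder α] {p : α → Prop}
    [DecidablePred p] (hp : Antitone p) (s : Finset α) {k : ℕ} (h : #s = k) (i : Fin k) :
    p (s.orderEmbOfFin h i) ↔ (i : ℕ) < #{y ∈ s | p y} := by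
  set e := s.orderEmbOfFin h
  have hcard : #{y ∈ s | p y} = #({j | p (e j)} : Finset (Fin k)) := by
    rw [← map_orderEmbOfFin_univ s h, filter_map, card_map]
    rfl
  rw [hcard]
  constructor
  · intro hi
    have hsub : Iic i ⊆ ({j | p (e j)} : Finset (Fin k)) := fun j hj =>
      mem_filter.mpr ⟨mem_univ j, hp (e.monotone (mem_Iic.mp hj)) hi⟩
    simpa using card_le_card hsub
  · intro hi
    by_contra hni
    have hsub : ({j | p (e j)} : Finset (Fin k)) ⊆ Iio i := fun j hj =>
      mem_Iio.mpr (lt_of_not_ge fun hij => hni (hp (e.monotone hij) (mem_filter.mp hj).2))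
    simpa using (card_le_card hsub).trans_lt' hi

lemma Fin.antitone_val_le {n : ℕ} (m : ℕ) : Antitone fun x : Fin n => x.val ≤ m :=
  fun _ _ hxy h => le_trans hxy h

section Ballot

variable {l : ℕ}

def IsBallot (P : Finset (Fin (2 * l + 1))) : Prop :=
  #P = l ∧ ∀ m : ℕ, #{x ∈ P | x.val ≤ m} < #{x ∈ Pᶜ | x.val ≤ m}

lemma card_compl_of_card_eq {P : Finset (Fin (2 * l + 1))} (hP : #P = l) : #Pᶜ = l + 1 := by
  rw [card_compl, hP, Fintype.card_fin]
  omega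

lemma IsBallot.zero_notMem {P : Finset (Fin (2 * l + 1))} (hP : IsBallot P) : 0 ∉ P := by
  intro h0
  have := hP.2 0
  simp_all [Fin.val_eq_zero_iff, Finset.filter_eq']

variable {P : Finset (Fin (2 * l + 1))}

lemma isBallot_iff_interlace (hP : #P = l) :
    IsBallot P ↔ ∀ m (hm : m < l),
      Pᶜ.orderEmbOfFin (card_compl_of_card_eq hP) ⟨m + 1, by omega⟩
        < P.orderEmbOfFin hP ⟨m, hm⟩ := by
  have hPc := card_compl_of_card_eq hP
  constructor
  · intro hB m hm
    set k := P.orderEmbOfFin hP ⟨m, hm⟩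
    have hk : m < #{x ∈ P | x.val ≤ k.val} :=
      ((Fin.antitone_val_le k).orderEmbOfFin_iff_lt_card_filter P hP _).mp le_rfl
    have hle := ((Fin.antitone_val_le k).orderEmbOfFin_iff_lt_card_filter Pᶜ hPc
      ⟨m + 1, by omega⟩).mpr (by have := hB.2 k; simp only at this ⊢; omega)
    refine lt_of_le_of_ne hle fun heq => ?_
    have hmem := Pᶜ.orderEmbOfFin_mem hPc ⟨m + 1, by omega⟩
    rw [heq, mem_compl] at hmem
    exact hmem (P.orderEmbOfFin_mem hP _)
  · intro hlt
    refine ⟨hP, fun m => ?_⟩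
    by_cases h : #{x ∈ P | x.val ≤ m} = 0
    · have h0 : (0 : Fin (2 * l + 1)) ∉ P := fun h0 =>
        filter_eq_empty_iff.mp (card_eq_zero.mp h) h0 (Nat.zero_le m)
      rw [h]
      exact card_pos.mpr ⟨0, by simp [h0]⟩
    · -- If `P` has `a > 0` elements `≤ m`, its `(a-1)`-st element is `≤ m`, hence so is the
      -- `a`-th element of `Pᶜ` (counting from `0`).
      have ha : #{x ∈ P | x.val ≤ m} - 1 < l :=
        (Nat.sub_one_lt h).trans_le ((card_le_card (filter_subset _ P)).trans_eq hP)
      have hpeak := ((Fin.antitone_val_le m).orderEmbOfFin_iff_lt_card_filter P hP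
        ⟨_, ha⟩).mpr (Nat.sub_one_lt h)
      have := ((Fin.antitone_val_le m).orderEmbOfFin_iff_lt_card_filter Pᶜ hPc
        ⟨_, by omega⟩).mp (le_trans (Fin.le_def.mp (hlt _ ha).le) hpeak)
      simp only at this
      omega

def stepOf (P : Finset (Fin (2 * l + 1))) (k : Fin (2 * l + 1)) : DyckStep :=
  if k ∈ P then D else U

-- The value `0` lies outside every ballot set, so its step, always `U`, is left out.
def stepWord (P : Finset (Fin (2 * l + 1))) : List DyckStep :=
  List.ofFn fun i : Fin (2 * l) => stepOf P i.succ

lemma ofFn_stepOf (h0 : 0 ∉ P) : List.ofFn (stepOf P) = U :: stepWord P := by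
  rw [List.ofFn_succ, stepWord, stepOf, if_neg h0]

lemma count_D_take_stepWord (h0 : 0 ∉ P) (m : ℕ) :
    ((stepWord P).take m).count D = #{x ∈ P | x.val ≤ m} := by
  have := List.count_take_ofFn (stepOf P) D (m + 1)
  rw [ofFn_stepOf h0, List.take_succ_cons, List.count_cons_of_ne (by decide)] at this
  rw [this]
  congr 1
  ext x
  rw [mem_filter, mem_filter, Nat.lt_succ_iff, stepOf]
  by_cases hx : x ∈ P <;> simp [hx]

lemma count_U_take_stepWord (h0 : 0 ∉ P) (m : ℕ) :
    ((stepWord P).take m).count U + 1 = #{x ∈ Pᶜ | x.val ≤ m} := by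
  have := List.count_take_ofFn (stepOf P) U (m + 1)
  rw [ofFn_stepOf h0, List.take_succ_cons, List.count_cons_self] at this
  rw [this]
  congr 1
  ext x
  rw [mem_filter, mem_filter, Nat.lt_succ_iff, stepOf, mem_compl]
  by_cases hx : x ∈ P <;> simp [hx]

lemma isBallot_iff_stepWord (h0 : 0 ∉ P) :
    IsBallot P ↔ (stepWord P).count U = (stepWord P).count D ∧
      ∀ m, ((stepWord P).take m).count D ≤ ((stepWord P).take m).count U := by
  have hfilter (Q : Finset (Fin (2 * l + 1))) : {x ∈ Q | x.val ≤ 2 * l} = Q :=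
    filter_true_of_mem fun x _ => Nat.lt_succ_iff.mp x.isLt
  have hD := count_D_take_stepWord h0 (2 * l)
  have hU := count_U_take_stepWord h0 (2 * l)
  rw [hfilter, List.take_of_length_le (by simp [stepWord])] at hD hU
  have hcard := card_add_card_compl P
  rw [Fintype.card_fin] at hcard
  refine ⟨fun ⟨hP, hlt⟩ => ⟨by omega, fun m => ?_⟩,
    fun ⟨heq, hle⟩ => ⟨by omega, fun m => ?_⟩⟩
  · have := hlt m
    rw [← count_D_take_stepWord h0, ← count_U_take_stepWord h0] at this
    omega
  · rw [← count_D_take_stepWord h0, ← count_U_take_stepWord h0]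
    exact Nat.lt_succ_of_le (hle m)

lemma eq_of_stepWord_eq {Q : Finset (Fin (2 * l + 1))} (hP : 0 ∉ P) (hQ : 0 ∉ Q)
    (h : stepWord P = stepWord Q) : P = Q := by
  have hstep : stepOf P = stepOf Q :=
    List.ofFn_injective (by rw [ofFn_stepOf hP, ofFn_stepOf hQ, h])
  ext k
  have := congrFun hstep k
  unfold stepOf at this
  split_ifs at this <;> simp_all

lemma exists_stepWord_eq {L : List DyckStep} (hL : L.length = 2 * l) :
    ∃ P : Finset (Fin (2 * l + 1)), 0 ∉ P ∧ stepWord P = L := by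
  let f : Fin (2 * l + 1) → DyckStep := Fin.cons U fun i => L[i]
  have hf : stepOf ({k | f k = D} : Finset _) = f := by
    funext k
    unfold stepOf
    cases h : f k <;> simp [h]
  refine ⟨({k | f k = D} : Finset _), by simp [f], ?_⟩
  apply List.ext_getElem (by simp [stepWord, hL])
  intro i _ _
  simp only [stepWord, List.getElem_ofFn, hf, f, Fin.cons_succ]
  rfl

def IsBallot.toDyckWord (hP : IsBallot P) : DyckWord where
  toList := stepWord P
  count_U_eq_count_D := ((isBallot_iff_stepWord hP.zero_notMem).mp hP).1
  count_D_le_count_U := ((isBallot_iff_stepWord hP.zero_notMem).mp hP).2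

lemma IsBallot.semilength_toDyckWord (hP : IsBallot P) : hP.toDyckWord.semilength = l := by
  have h : 2 * _ = (stepWord P).length := hP.toDyckWord.two_mul_semilength_eq_length
  rw [stepWord, List.length_ofFn] at h
  omega

lemma exists_isBallot_toDyckWord_eq (q : DyckWord) (hq : q.semilength = l) :
    ∃ (P : Finset (Fin (2 * l + 1))) (hP : IsBallot P), hP.toDyckWord = q := by
  obtain ⟨P, h0, hPq⟩ :=
    exists_stepWord_eq (l := l) (by rw [← q.two_mul_semilength_eq_length, hq])
  have hP : IsBallot P := (isBallot_iff_stepWord h0).mpr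
    (hPq ▸ ⟨q.count_U_eq_count_D, q.count_D_le_count_U⟩)
  exact ⟨P, hP, DyckWord.ext hPq⟩

end Ballot

section Perm

variable {n : ℕ} {w : Equiv.Perm (Fin n)}

lemma upDown_iff : UpDown w ↔
    (∀ m (h : 2 * m + 1 < n), w ⟨2 * m, by omega⟩ < w ⟨2 * m + 1, h⟩) ∧
      ∀ m (h : 2 * m + 2 < n), w ⟨2 * m + 2, h⟩ < w ⟨2 * m + 1, by omega⟩ := by
  constructor
  · intro hw
    exact ⟨fun m h => by simpa using hw (2 * m) h,
      fun m h => by simpa [Nat.add_mod] using hw (2 * m + 1) h⟩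
  · rintro ⟨heven, hodd⟩ i h
    obtain ⟨m, rfl | rfl⟩ := Nat.even_or_odd' i
    · simpa using heven m h
    · simpa [Nat.add_mod] using hodd m h

lemma apply_lt_of_occ321_eq_empty (hw : occ321 w = ∅) {a b c : Fin n} (hab : a < b)
    (hbc : b < c) (hcb : w c < w b) : w a < w b := by
  refine lt_of_le_of_ne (not_lt.mp fun hba => ?_) (w.injective.ne hab.ne)
  exact Set.eq_empty_iff_forall_notMem.mp hw (a, b, c) ⟨hab, hbc, hcb, hba⟩

def peakValues (w : Equiv.Perm (Fin n)) : Finset (Fin n) :=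
  {k | (w.symm k).val % 2 = 1}

lemma apply_mem_peakValues_iff (j : Fin n) : w j ∈ peakValues w ↔ j.val % 2 = 1 := by
  simp [peakValues]

end Perm

section Interleave

variable {l : ℕ} {P : Finset (Fin (2 * l + 1))}

def interleave (P : Finset (Fin (2 * l + 1))) (hP : #P = l) (j : Fin (2 * l + 1)) :
    Fin (2 * l + 1) :=
  if h : j.val % 2 = 0 then Pᶜ.orderEmbOfFin (card_compl_of_card_eq hP) ⟨j / 2, by omega⟩
  else P.orderEmbOfFin hP ⟨j / 2, by omega⟩

lemma interleave_of_val_eq_two_mul (hP : #P = l) {j : Fin (2 * l + 1)} {m : ℕ}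
    (hj : j.val = 2 * m) (hm : m < l + 1) :
    interleave P hP j = Pᶜ.orderEmbOfFin (card_compl_of_card_eq hP) ⟨m, hm⟩ := by
  simp [interleave, hj]

lemma interleave_of_val_eq_two_mul_add_one (hP : #P = l) {j : Fin (2 * l + 1)} {m : ℕ}
    (hj : j.val = 2 * m + 1) (hm : m < l) :
    interleave P hP j = P.orderEmbOfFin hP ⟨m, hm⟩ := by
  rw [interleave, dif_neg (by omega)]
  exact congrArg _ (Fin.ext (show j.val / 2 = m by omega))

lemma interleave_mem_iff (hP : #P = l) (j : Fin (2 * l + 1)) :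
    interleave P hP j ∈ P ↔ j.val % 2 = 1 := by
  unfold interleave
  split_ifs with hj
  · simpa [hj] using mem_compl.mp (orderEmbOfFin_mem _ _ _)
  · simp [Nat.mod_two_ne_zero.mp hj]

lemma interleave_lt_of_mod_two_eq (hP : #P = l) {i j : Fin (2 * l + 1)}
    (hij : i < j) (hmod : i.val % 2 = j.val % 2) : interleave P hP i < interleave P hP j := by
  rw [Fin.lt_def] at hij
  unfold interleave
  split_ifs with hi hj hj
  · exact OrderEmbedding.strictMono _ (Fin.mk_lt_mk.mpr (by omega))
  · omega
  · omega
  · exact OrderEmbedding.strictMono _ (Fin.mk_lt_mk.mpr (by omega))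

lemma interleave_injective (hP : #P = l) : Function.Injective (interleave P hP) := by
  intro i j hij
  have hmod : i.val % 2 = j.val % 2 := by
    have := interleave_mem_iff hP i
    rw [hij, interleave_mem_iff] at this
    omega
  by_contra hne
  rcases lt_or_gt_of_ne hne with h | h
  · exact (interleave_lt_of_mod_two_eq hP h hmod).ne hij
  · exact (interleave_lt_of_mod_two_eq hP h hmod.symm).ne' hij

end Interleave

section AlternatingPerm

variable {l : ℕ} {w : Equiv.Perm (Fin (2 * l + 1))}

lemma card_peakValues (w : Equiv.Perm (Fin (2 * l + 1))) : #(peakValues w) = l := by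
  have himage : peakValues w = univ.image fun i : Fin l => w ⟨2 * i + 1, by omega⟩ := by
    ext k
    obtain ⟨j, rfl⟩ := w.surjective k
    rw [apply_mem_peakValues_iff, mem_image]
    simp only [mem_univ, true_and, w.injective.eq_iff, Fin.ext_iff]
    constructor
    · intro hj
      exact ⟨⟨j / 2, by omega⟩, by simp only; omega⟩
    · rintro ⟨i, hi⟩
      omega
  rw [himage, card_image_of_injective, card_univ, Fintype.card_fin]
  intro i i' h
  simpa [w.injective.eq_iff, Fin.ext_iff] using h

lemma strictMono_apply_two_mul (hU : UpDown w) (h3 : occ321 w = ∅) (h0 : w 0 = 0) :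
    StrictMono fun i : Fin (l + 1) => w ⟨2 * i, by omega⟩ := by
  intro i j hij
  rw [Fin.lt_def] at hij
  refine lt_of_not_ge fun hle => ?_
  have hlt : w ⟨2 * j, by omega⟩ < w ⟨2 * i, by omega⟩ :=
    lt_of_le_of_ne hle (w.injective.ne (Fin.ne_of_val_ne (by simp only; omega)))
  rcases (i : ℕ).eq_zero_or_pos with hi | hi
  · have hzero : (⟨2 * i, by omega⟩ : Fin (2 * l + 1)) = 0 := Fin.ext (by simp [hi])
    rw [hzero, h0] at hlt
    exact Fin.not_lt_zero _ hlt
  · have hdesc := (upDown_iff.mp hU).2 (i - 1) (by omega)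
    have hidx : (⟨2 * (i - 1) + 2, by omega⟩ : Fin (2 * l + 1)) = ⟨2 * i, by omega⟩ :=
      Fin.ext (by simp only; omega)
    rw [hidx] at hdesc
    exact lt_asymm hdesc (apply_lt_of_occ321_eq_empty h3 (Fin.mk_lt_mk.mpr (by omega))
      (Fin.mk_lt_mk.mpr (by omega)) hlt)

lemma strictMono_apply_two_mul_add_one (hU : UpDown w) (h3 : occ321 w = ∅) :
    StrictMono fun i : Fin l => w ⟨2 * i + 1, by omega⟩ := by
  intro i j hij
  rw [Fin.lt_def] at hij
  exact apply_lt_of_occ321_eq_empty h3 (Fin.mk_lt_mk.mpr (by omega)) (Nat.lt_succ_self _)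
    ((upDown_iff.mp hU).2 j (by omega))

lemma interleave_peakValues (hU : UpDown w) (h3 : occ321 w = ∅) (h0 : w 0 = 0) :
    interleave (peakValues w) (card_peakValues w) = w := by
  have hvalley := orderEmbOfFin_unique (card_compl_of_card_eq (card_peakValues w))
    (fun i => by simp [apply_mem_peakValues_iff]) (strictMono_apply_two_mul hU h3 h0)
  have hpeak := orderEmbOfFin_unique (card_peakValues w)
    (fun i => by simp [apply_mem_peakValues_iff]) (strictMono_apply_two_mul_add_one hU h3)
  funext j
  obtain ⟨m, hj | hj⟩ := Nat.even_or_odd' j.val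
  · rw [interleave_of_val_eq_two_mul _ hj (by omega), ← hvalley]
    exact congrArg w (Fin.ext hj.symm)
  · rw [interleave_of_val_eq_two_mul_add_one _ hj (by omega), ← hpeak]
    exact congrArg w (Fin.ext hj.symm)

lemma isBallot_peakValues (hU : UpDown w) (h3 : occ321 w = ∅) (h0 : w 0 = 0) :
    IsBallot (peakValues w) := by
  refine (isBallot_iff_interlace (card_peakValues w)).mpr fun m hm => ?_
  have hvalley := interleave_of_val_eq_two_mul (card_peakValues w)
    (j := ⟨2 * m + 2, by omega⟩) (m := m + 1) (by simp only; ring) (by omega)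
  have hpeak := interleave_of_val_eq_two_mul_add_one (card_peakValues w)
    (j := ⟨2 * m + 1, by omega⟩) rfl hm
  rw [interleave_peakValues hU h3 h0] at hvalley hpeak
  rw [← hvalley, ← hpeak]
  exact (upDown_iff.mp hU).2 m (by omega)

lemma eq_of_peakValues_eq {w' : Equiv.Perm (Fin (2 * l + 1))}
    (hw : UpDown w ∧ occ321 w = ∅ ∧ w 0 = 0)
    (hw' : UpDown w' ∧ occ321 w' = ∅ ∧ w' 0 = 0)
    (h : peakValues w = peakValues w') : w = w' := by
  apply DFunLike.coe_injective
  rw [← interleave_peakValues hw.1 hw.2.1 hw.2.2, ← interleave_peakValues hw'.1 hw'.2.1 hw'.2.2]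
  congr 1

variable {P : Finset (Fin (2 * l + 1))}

noncomputable def IsBallot.toPerm (hP : IsBallot P) : Equiv.Perm (Fin (2 * l + 1)) :=
  Equiv.ofBijective (interleave P hP.1)
    (Finite.injective_iff_bijective.mp (interleave_injective hP.1))

lemma IsBallot.upDown_toPerm (hP : IsBallot P) : UpDown hP.toPerm := by
  have hlt := (isBallot_iff_interlace hP.1).mp hP
  refine upDown_iff.mpr ⟨fun m h => ?_, fun m h => ?_⟩
  · rw [IsBallot.toPerm, Equiv.ofBijective_apply, Equiv.ofBijective_apply,
      interleave_of_val_eq_two_mul _ rfl (by omega),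
      interleave_of_val_eq_two_mul_add_one _ rfl (by omega)]
    exact (OrderEmbedding.strictMono _ (Fin.mk_lt_mk.mpr (Nat.lt_succ_self m))).trans (hlt m _)
  · rw [IsBallot.toPerm, Equiv.ofBijective_apply, Equiv.ofBijective_apply,
      interleave_of_val_eq_two_mul _ (m := m + 1) (by simp only; ring) (by omega),
      interleave_of_val_eq_two_mul_add_one _ rfl (by omega)]
    exact hlt m _

lemma IsBallot.occ321_toPerm (hP : IsBallot P) : occ321 hP.toPerm = ∅ := by
  refine Set.eq_empty_iff_forall_notMem.mpr ?_
  rintro ⟨a, b, c⟩ ⟨hab, hbc, hcb, hba⟩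
  dsimp only at hab hbc hcb hba
  have hmono {i j : Fin (2 * l + 1)} (hij : i < j) (hmod : i.val % 2 = j.val % 2) :
      hP.toPerm i < hP.toPerm j :=
    interleave_lt_of_mod_two_eq hP.1 hij hmod
  by_cases hab' : a.val % 2 = b.val % 2
  · exact lt_asymm (hmono hab hab') hba
  by_cases hbc' : b.val % 2 = c.val % 2
  · exact lt_asymm (hmono hbc hbc') hcb
  exact lt_asymm (hmono (hab.trans hbc) (by omega)) (hcb.trans hba)

lemma IsBallot.toPerm_zero (hP : IsBallot P) : hP.toPerm 0 = 0 := by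
  rw [IsBallot.toPerm, Equiv.ofBijective_apply,
    interleave_of_val_eq_two_mul _ (m := 0) rfl (by omega), orderEmbOfFin_zero _ (by omega)]
  exact Fin.ext (Nat.eq_zero_of_le_zero (min'_le Pᶜ 0 (mem_compl.mpr hP.zero_notMem)))

lemma IsBallot.peakValues_toPerm (hP : IsBallot P) : peakValues hP.toPerm = P := by
  ext k
  obtain ⟨j, rfl⟩ := hP.toPerm.surjective k
  rw [apply_mem_peakValues_iff]
  exact (interleave_mem_iff hP.1 j).symm

end AlternatingPerm

theorem stmt10 (l : ℕ) :
    Nat.card {w : Equiv.Perm (Fin (2 * l + 1)) // UpDown w ∧ occ321 w = ∅ ∧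
        w ⟨0, by omega⟩ = ⟨0, by omega⟩} = catalan l := by
  calc _ = Nat.card {P : Finset (Fin (2 * l + 1)) // IsBallot P} := by
        refine Nat.card_eq_of_bijective
          (fun w => ⟨peakValues w.1, isBallot_peakValues w.2.1 w.2.2.1 w.2.2.2⟩) ⟨?_, ?_⟩
        · rintro ⟨w, hw⟩ ⟨w', hw'⟩ h
          exact Subtype.ext (eq_of_peakValues_eq hw hw' (congrArg Subtype.val h))
        · rintro ⟨P, hP⟩
          exact ⟨⟨hP.toPerm, hP.upDown_toPerm, hP.occ321_toPerm, hP.toPerm_zero⟩,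
            Subtype.ext hP.peakValues_toPerm⟩
    _ = Nat.card {q : DyckWord // q.semilength = l} := by
        refine Nat.card_eq_of_bijective
          (fun P => ⟨P.2.toDyckWord, P.2.semilength_toDyckWord⟩) ⟨?_, ?_⟩
        · rintro ⟨P, hP⟩ ⟨Q, hQ⟩ h
          exact Subtype.ext (eq_of_stepWord_eq hP.zero_notMem hQ.zero_notMem
            (congrArg (DyckWord.toList ∘ Subtype.val) h))
        · rintro ⟨q, hq⟩
          obtain ⟨P, hP, hPq⟩ := exists_isBallot_toDyckWord_eq q hq
          exact ⟨⟨P, hP⟩, Subtype.ext hPq⟩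
    _ = catalan l := by
        rw [Nat.card_eq_fintype_card, DyckWord.card_dyckWord_semilength_eq_catalan]
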